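/- Let a < b be integers, α : ℤ → ℝ with 0 < α(t) ≤ 1 for all t, B : ℝ → ℝ a normalization function with B(α(t)) ≠ 0. Define the type I left AB fractional sum (ᴬᴮₐ∇^{-α(t)} g)(t) = ((1-α(t))/B(α(t))) g(t) + (α(t)/(B(α(t)) Γ(α(t)))) ∑_{s=a+1}^{t} (t-s+1)^{\overline{α(t)-1}} g(s), and the type II right AB fractional sum (*ᴬᴮ∇_b^{-α(t)} f)(t) = ((1-α(t))/B(α(t))) f(t) + ∑_{s=t}^{b-1} (α(s)/(B(α(s)) Γ(α(s)))) (s-t+1)^{\overline{α(s)-1}} f(s). Then ∑_{t=a+1}^{b-1} f(t) · (ᴬᴮₐ∇^{-α(t)} g)(t) = ∑_{t=a+1}^{b-1} g(t) · (*ᴬᴮ∇_b^{-α(t)} f)(t). -/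

import Mathlib

/-! The local terms agree pointwise. The fractional parts form a double sum over the triangle
`a < s ≤ t < b`; exchanging the order of summation carries the weight `α t / (B (α t) Γ(α t))`
of the left sum with the summation variable, which is why the right sum has `α s` inside. -/

/-- Generalized rising factorial `x^{\overline{β}} = Γ(x+β)/Γ(x)`. -/
noncomputable def rise (x β : ℝ) : ℝ := Real.Gamma (x + β) / Real.Gamma x

/-- Type I left AB nabla fractional sum of variable order. -/
noncomputable def ABleftI (a : ℤ) (α : ℤ → ℝ) (B : ℝ → ℝ) (g : ℤ → ℝ) (t : ℤ) : ℝ :=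
  (1 - α t) / B (α t) * g t +
    α t / (B (α t) * Real.Gamma (α t)) *
      ∑ s ∈ Finset.Icc (a + 1) t, rise ((t : ℝ) - s + 1) (α t - 1) * g s

/-- Type II right AB nabla fractional sum of variable order. -/
noncomputable def ABrightII (b : ℤ) (α : ℤ → ℝ) (B : ℝ → ℝ) (f : ℤ → ℝ) (t : ℤ) : ℝ :=
  (1 - α t) / B (α t) * f t +
    ∑ s ∈ Finset.Icc t (b - 1),
      α s / (B (α s) * Real.Gamma (α s)) * rise ((s : ℝ) - t + 1) (α s - 1) * f s

open Finset

theorem Finset.sum_Icc_sum_Icc_comm {ι M : Type*} [Preorder ι] [LocallyFiniteOrder ι]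
    [AddCommMonoid M] (a c : ι) (F : ι → ι → M) :
    ∑ t ∈ Icc a c, ∑ s ∈ Icc a t, F t s = ∑ s ∈ Icc a c, ∑ t ∈ Icc s c, F t s :=
  sum_comm' fun t s => by
    simp only [mem_Icc]
    constructor
    · rintro ⟨⟨_, htc⟩, has, hst⟩
      exact ⟨⟨hst, htc⟩, has, hst.trans htc⟩
    · rintro ⟨⟨hst, htc⟩, has, _⟩
      exact ⟨⟨has.trans hst, htc⟩, has, hst⟩

/-- A lower-triangular kernel `K` on `[a, c]` and its transpose are adjoint for the pairing
`⟨f, g⟩ = ∑ f t * g t`. -/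
theorem Finset.sum_mul_sum_Icc_kernel_comm {ι R : Type*} [Preorder ι] [LocallyFiniteOrder ι]
    [CommSemiring R] (a c : ι) (K : ι → ι → R) (f g : ι → R) :
    ∑ t ∈ Icc a c, f t * ∑ s ∈ Icc a t, K t s * g s =
      ∑ s ∈ Icc a c, g s * ∑ t ∈ Icc s c, K t s * f t := by
  simp only [mul_sum]
  rw [sum_Icc_sum_Icc_comm]
  exact sum_congr rfl fun s _ => sum_congr rfl fun t _ => by ring

theorem AB_sum_by_parts_I_II_general
    (a b : ℤ) (f g : ℤ → ℝ) (α : ℤ → ℝ) (B : ℝ → ℝ) :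
    ∑ t ∈ Finset.Icc (a + 1) (b - 1), f t * ABleftI a α B g t
    = ∑ t ∈ Finset.Icc (a + 1) (b - 1), g t * ABrightII b α B f t := by
  unfold ABleftI ABrightII
  simp only [mul_add, sum_add_distrib]
  congr 1
  · exact sum_congr rfl fun t _ => by ring
  · convert sum_mul_sum_Icc_kernel_comm (a + 1) (b - 1)
      (fun t s => α t / (B (α t) * Real.Gamma (α t)) * rise ((t : ℝ) - s + 1) (α t - 1)) f g
      using 3 with t
    rw [mul_sum]
    exact sum_congr rfl fun s _ => by ring

/-- Integration by parts for AB nabla fractional sums (type I left / type II right). -/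
theorem AB_sum_by_parts_I_II
    (a b : ℤ) (hab : a < b) (f g : ℤ → ℝ) (α : ℤ → ℝ) (B : ℝ → ℝ)
    (hα : ∀ t, 0 < α t ∧ α t ≤ 1) (hB : ∀ t, B (α t) ≠ 0) :
    ∑ t ∈ Finset.Icc (a + 1) (b - 1), f t * ABleftI a α B g t
    = ∑ t ∈ Finset.Icc (a + 1) (b - 1), g t * ABrightII b α B f t :=
  AB_sum_by_parts_I_II_general a b f g α B
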